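/- arXiv:1707.07505 — 4 statements merged into one kernel-verified Lean document; each statement's English description precedes it below -/
import Mathlib

section
/- Let R be an integral domain and let ⋆ be a stable (semi)star operation on R. Then for every prime ideal P of R (viewed as an R-submodule of the quotient field K), either P^⋆ = P or P^⋆ = R. -/
open Pointwise

section Defs

variable {R : Type*} (K : Type*) [CommRing R] [IsDomain R] [Field K] [Algebra R K]
  [IsFractionRing R K]

/-- A function `f` on the `R`-submodules of the quotient field `K` is a semistar operation if it
is extensive, idempotent, monotone and commutes with scaling by elements of `K`. -/
def IsSemistarOperation (f : Submodule R K → Submodule R K) : Prop :=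
  (∀ I : Submodule R K, I ≤ f I) ∧
  (∀ I : Submodule R K, f (f I) = f I) ∧
  (∀ I J : Submodule R K, I ≤ J → f I ≤ f J) ∧
  (∀ (x : K) (I : Submodule R K), f (x • I) = x • f I)

/-- A semistar operation is stable if it distributes over finite intersections. -/
def IsStableOperation (f : Submodule R K → Submodule R K) : Prop :=
  ∀ I J : Submodule R K, f (I ⊓ J) = f I ⊓ f J

/-- An ideal of `R`, viewed as an `R`-submodule of the quotient field `K`. -/
def idealToK (I : Ideal R) : Submodule R K :=
  Submodule.map (Algebra.linearMap R K) I

/-- A Prüfer domain is an integral domain in which every nonzero finitely generated ideal is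
invertible (as a fractional ideal, i.e. as a submodule of the quotient field). -/
def IsPruferDomain : Prop :=
  ∀ I : Ideal R, I ≠ ⊥ → I.FG → ∃ J : Submodule R K, idealToK K I * J = 1

/-- The localization `R_P` of `R` at the prime `P`, viewed as an `R`-submodule of the quotient
field `K`. -/
noncomputable def locSub (P : Ideal R) (hP : P.IsPrime) : Submodule R K :=
  haveI := hP
  Subalgebra.toSubmodule
    (Localization.subalgebra K P.primeCompl
      (fun x hx => mem_nonZeroDivisors_of_ne_zero (fun h0 => hx (h0 ▸ P.zero_mem))))

/-- The `v`-operation of the valuation ring `R_P`, applied to the `R_P`-submodule of `K`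
generated by (the image of) `I`: it sends `I` to `(R_P : (R_P : IR_P))`. -/
noncomputable def vOp (P : Ideal R) (hP : P.IsPrime) (I : Submodule R K) : Submodule R K :=
  locSub K P hP / (locSub K P hP / (I * locSub K P hP))

/-- The quasi-spectrum of a (stable) semistar operation: the set of primes `P` such that
`P^⋆ ∩ R = P`. -/
def QSpec (f : Submodule R K → Submodule R K) : Set (Ideal R) :=
  {P | P.IsPrime ∧ f (idealToK K P) ⊓ 1 = idealToK K P}

/-- The pseudo-spectrum of a stable semistar operation: the set of primes `P` such that
`P^⋆ ∩ R = R` and `L^⋆ ∩ R = L` for some `P`-primary ideal `L`. -/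
def PsSpec (f : Submodule R K → Submodule R K) : Set (Ideal R) :=
  {P | P.IsPrime ∧ f (idealToK K P) ⊓ 1 = 1 ∧
    ∃ L : Ideal R, L.IsPrimary ∧ L.radical = P ∧ f (idealToK K L) ⊓ 1 = idealToK K L}

/-- The normalized stable version of a stable semistar operation `f`:
`I ↦ ⋂ {IR_P : P ∈ QSpec} ∩ ⋂ {(IR_P)^{v_{R_P}} : P ∈ PsSpec}`. -/
noncomputable def normStable (f : Submodule R K → Submodule R K) (I : Submodule R K) :
    Submodule R K :=
  (⨅ P : QSpec K f, I * locSub K P.1 P.2.1) ⊓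
    ⨅ P : PsSpec K f, vOp K P.1 P.2.1 I

end Defs



lemma mem_psmul {R K : Type*} [CommRing R] [Field K] [Algebra R K] {x w : K}
    {S : Submodule R K} : w ∈ x • S ↔ ∃ s ∈ S, x • s = w := by
  rw [← SetLike.mem_coe, Submodule.coe_pointwise_smul]
  exact Set.mem_smul_set

/-- If `⋆` is a stable (semi)star operation on the integral domain `R`, then for every prime
ideal `P` of `R`, either `P^⋆ = P` or `P^⋆ = R`. -/
theorem stable_semistar_prime_closed_or_top {R K : Type*} [CommRing R] [IsDomain R] [Field K] [Algebra R K]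
    [IsFractionRing R K]
    (f : Submodule R K → Submodule R K) (hf : IsSemistarOperation K f)
    (hstable : IsStableOperation K f) (hsemi : f 1 = 1)
    (P : Ideal R) (hP : P.IsPrime) :
    f (idealToK K P) = idealToK K P ∨ f (idealToK K P) = 1 := by
  obtain ⟨hext, hidem, hmono, hsmul⟩ := hf
  set A := idealToK K P with hAdef
  have hA1 : A ≤ 1 := by
    rintro z ⟨p, hp, rfl⟩
    exact Submodule.mem_one.mpr ⟨p, rfl⟩
  have hfA1 : f A ≤ 1 := by
    have h := hstable A 1
    rw [inf_eq_left.mpr hA1, hsemi] at h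
    rw [h]; exact inf_le_right
  by_cases h : f A ≤ A
  · left; exact le_antisymm h (hext A)
  · right
    obtain ⟨z, hzf, hzA⟩ := SetLike.not_le_iff_exists.mp h
    obtain ⟨r, rfl⟩ := Submodule.mem_one.mp (hfA1 hzf)
    have hrP : r ∉ P := fun hr => hzA ⟨r, hr, rfl⟩
    set x : K := algebraMap R K r with hxdef
    have key : A ⊓ x • (1 : Submodule R K) = x • A := by
      apply le_antisymm
      · rintro w ⟨hwA, hw1⟩
        obtain ⟨p, hp, hpw⟩ := hwA
        obtain ⟨s, hs1, hws⟩ := mem_psmul.mp hw1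
        obtain ⟨t, rfl⟩ := Submodule.mem_one.mp hs1
        have hpt : p = r * t := by
          apply IsFractionRing.injective R K
          have hws' : algebraMap R K r * algebraMap R K t = w := hws
          rw [map_mul, hws']
          exact hpw
        have htP : t ∈ P := by
          rcases hP.mem_or_mem (hpt ▸ hp) with h1 | h2
          · exact absurd h1 hrP
          · exact h2
        refine mem_psmul.mpr ⟨algebraMap R K t, ⟨t, htP, rfl⟩, ?_⟩
        rw [← hws]
      · rintro w hw
        obtain ⟨a, haA, rfl⟩ := mem_psmul.mp hw
        obtain ⟨p, hp, rfl⟩ := haA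
        constructor
        · refine ⟨r * p, P.mul_mem_left r hp, ?_⟩
          simp [hxdef, smul_eq_mul, map_mul]
        · exact mem_psmul.mpr ⟨algebraMap R K p, Submodule.mem_one.mpr ⟨p, rfl⟩, rfl⟩
    have hst := hstable A (x • (1 : Submodule R K))
    rw [key, hsmul, hsmul, hsemi] at hst
    have hx0 : x ≠ 0 := by
      rw [hxdef, map_ne_zero_iff _ (IsFractionRing.injective R K)]
      rintro rfl; exact hrP P.zero_mem
    have hxmem : x ∈ f A ⊓ x • (1 : Submodule R K) := by
      exact ⟨hzf, mem_psmul.mpr ⟨1, Submodule.mem_one.mpr ⟨1, map_one _⟩, by simp⟩⟩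
    rw [← hst] at hxmem
    obtain ⟨y, hyA, hxy⟩ := mem_psmul.mp hxmem
    have hy1 : y = 1 := by
      have hxy' : x * y = x * 1 := by rw [mul_one]; exact hxy
      exact mul_left_cancel₀ hx0 hxy' 
    refine le_antisymm hfA1 (Submodule.one_le.mpr ?_)
    rwa [hy1] at hyA
end

section
/- Let R be a Prüfer domain, let ⋆ be a stable (semi)star operation on R, let P be a prime ideal of R and let L be a P-primary ideal of R. Then L^⋆ = L if and only if (LR_P)^⋆ = LR_P. -/
open Pointwise

section AuxLemmas

variable {R K : Type*} [CommRing R] [IsDomain R] [Field K] [Algebra R K] [IsFractionRing R K]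

lemma mem_locSub_iff {P : Ideal R} (hP : P.IsPrime) (z : K) :
    z ∈ locSub K P hP ↔ ∃ a s : R, s ∉ P ∧ z * algebraMap R K s = algebraMap R K a := by
  constructor
  · rintro ⟨a, s, hs, rfl⟩
    exact ⟨a, s, hs, (IsLocalization.eq_mk'_iff_mul_eq.mp rfl)⟩
  · rintro ⟨a, s, hs, h⟩
    exact ⟨a, s, hs, IsLocalization.eq_mk'_iff_mul_eq.mpr h⟩

lemma mem_idealToK_iff {L : Ideal R} (z : K) :
    z ∈ idealToK K L ↔ ∃ l ∈ L, algebraMap R K l = z := by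
  simp [idealToK, Algebra.linearMap_apply]

lemma map_ne_zero' {s : R} (hs : s ≠ 0) : algebraMap R K s ≠ 0 := by
  simpa [IsFractionRing.to_map_eq_zero_iff] using hs

lemma mem_mul_locSub_iff {P : Ideal R} (hP : P.IsPrime) {L : Ideal R} (z : K) :
    z ∈ idealToK K L * locSub K P hP ↔
      ∃ l ∈ L, ∃ s ∉ P, z * algebraMap R K s = algebraMap R K l := by
  constructor
  · intro hz
    refine Submodule.mul_induction_on hz ?_ ?_
    · intro m hm n hn
      obtain ⟨l, hl, rfl⟩ := (mem_idealToK_iff m).mp hm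
      obtain ⟨a, s, hs, hns⟩ := (mem_locSub_iff hP n).mp hn
      refine ⟨l * a, Ideal.mul_mem_right a _ hl, s, hs, ?_⟩
      rw [map_mul, mul_assoc, hns]
    · rintro x y ⟨l1, hl1, s1, hs1, h1⟩ ⟨l2, hl2, s2, hs2, h2⟩
      refine ⟨l1 * s2 + l2 * s1, Ideal.add_mem _ (Ideal.mul_mem_right _ _ hl1)
        (Ideal.mul_mem_right _ _ hl2), s1 * s2, fun h => (hP.mem_or_mem h).elim hs1 hs2, ?_⟩
      rw [map_add, map_mul, map_mul, map_mul]
      calc (x + y) * (algebraMap R K s1 * algebraMap R K s2)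
          = (x * algebraMap R K s1) * algebraMap R K s2
            + (y * algebraMap R K s2) * algebraMap R K s1 := by ring
        _ = _ := by rw [h1, h2]
  · rintro ⟨l, hl, s, hs, h⟩
    have hs0 : s ≠ 0 := fun h0 => hs (h0 ▸ P.zero_mem)
    have hsK : algebraMap R K s ≠ 0 := map_ne_zero' hs0
    have hz : z = algebraMap R K l * (algebraMap R K s)⁻¹ := by
      field_simp [← h]
      exact h
    rw [hz]
    refine Submodule.mul_mem_mul ((mem_idealToK_iff _).mpr ⟨l, hl, rfl⟩)
      ((mem_locSub_iff hP _).mpr ⟨1, s, hs, by simp [inv_mul_cancel₀ hsK]⟩)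

lemma sat_eq {P : Ideal R} (hP : P.IsPrime) {L : Ideal R} (hL : L.IsPrimary)
    (hLP : L.radical = P) :
    (idealToK K L * locSub K P hP) ⊓ 1 = idealToK K L := by
  apply le_antisymm
  · rintro z ⟨hz1, hz2⟩
    obtain ⟨r, hr⟩ := (Submodule.mem_one).mp hz2
    obtain ⟨l, hl, s, hs, h⟩ := (mem_mul_locSub_iff hP z).mp hz1
    rw [← hr, ← map_mul] at h
    have hrs : r * s ∈ L := by
      rw [IsFractionRing.injective R K h]; exact hl
    rcases (Ideal.isPrimary_iff.mp hL).2 hrs with h1 | h2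
    · exact (mem_idealToK_iff z).mpr ⟨r, h1, hr⟩
    · exact absurd (hLP ▸ h2) hs
  · intro z hz
    refine ⟨(mem_mul_locSub_iff hP z).mpr ?_, ?_⟩
    · obtain ⟨l, hl, rfl⟩ := (mem_idealToK_iff z).mp hz
      exact ⟨l, hl, 1, fun h => hP.ne_top (Ideal.eq_top_iff_one P |>.mpr h), by simp⟩
    · obtain ⟨l, hl, rfl⟩ := (mem_idealToK_iff z).mp hz
      exact Submodule.mem_one.mpr ⟨l, rfl⟩

lemma locSub_valuation (hR : IsPruferDomain (R := R) K) {P : Ideal R} (hP : P.IsPrime) (z : K) :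
    z ∈ locSub K P hP ∨ z⁻¹ ∈ locSub K P hP := by
  rcases eq_or_ne z 0 with rfl | hz
  · left; exact zero_mem _
  obtain ⟨a, b, hb, rfl⟩ := IsFractionRing.div_surjective (A := R) z
  have hbne : (b : R) ≠ 0 := nonZeroDivisors.ne_zero hb
  have hbK : algebraMap R K b ≠ 0 := map_ne_zero' hbne
  have haK : algebraMap R K a ≠ 0 := by
    intro h0; exact hz (by rw [h0, zero_div])
  have hane : a ≠ 0 := fun h0 => haK (by rw [h0, map_zero])
  set I : Ideal R := Ideal.span {a, b} with hI
  have hIne : I ≠ ⊥ := by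
    intro h0
    exact hane (Ideal.span_eq_bot.mp h0 a (by simp) )
  obtain ⟨J, hJ⟩ := hR I hIne (Submodule.fg_span (Set.toFinite _))
  have hImem : ∀ x ∈ ({a, b} : Set R), algebraMap R K x ∈ idealToK K I := by
    intro x hx
    exact (mem_idealToK_iff _).mpr ⟨x, Ideal.subset_span hx, rfl⟩
  have haI : algebraMap R K a ∈ idealToK K I := hImem a (by simp)
  have hbI : algebraMap R K b ∈ idealToK K I := hImem b (by simp)
  have hone : (1 : K) ∈ idealToK K I * J := by rw [hJ]; exact Submodule.one_le.mp le_rfl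
  -- decompose 1 = a*u + b*v with u v ∈ J
  have hspan : idealToK K I =
      Submodule.span R {algebraMap R K a} ⊔ Submodule.span R {algebraMap R K b} := by
    rw [hI, idealToK]
    rw [Ideal.span, Submodule.map_span, Set.image_insert_eq, Set.image_singleton,
      Submodule.span_insert]
    rfl
  rw [hspan, Submodule.sup_mul] at hone
  obtain ⟨u, hu, v, hv, huv⟩ := Submodule.mem_sup.mp hone
  obtain ⟨u', hu', rfl⟩ := Submodule.mem_span_singleton_mul.mp hu
  obtain ⟨v', hv', rfl⟩ := Submodule.mem_span_singleton_mul.mp hv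
  -- the four products are in R
  obtain ⟨r1, hr1⟩ := Submodule.mem_one.mp (hJ ▸ Submodule.mul_mem_mul haI hu')
  obtain ⟨r2, hr2⟩ := Submodule.mem_one.mp (hJ ▸ Submodule.mul_mem_mul hbI hv')
  obtain ⟨r3, hr3⟩ := Submodule.mem_one.mp (hJ ▸ Submodule.mul_mem_mul hbI hu')
  obtain ⟨r4, hr4⟩ := Submodule.mem_one.mp (hJ ▸ Submodule.mul_mem_mul haI hv')
  have hsum : r1 + r2 = 1 := by
    apply IsFractionRing.injective R K
    rw [map_add, map_one, hr1, hr2, huv]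
  have hcases : r1 ∉ P ∨ r2 ∉ P := by
    by_contra hc
    push_neg at hc
    exact hP.ne_top (Ideal.eq_top_iff_one P |>.mpr (hsum ▸ P.add_mem hc.1 hc.2))
  rcases hcases with h1 | h2
  · right
    refine (mem_locSub_iff hP _).mpr ⟨r3, r1, h1, ?_⟩
    rw [hr1, hr3]
    field_simp
  · left
    refine (mem_locSub_iff hP _).mpr ⟨r4, r2, h2, ?_⟩
    rw [hr2, hr4]
    field_simp

end AuxLemmas



/-- Let `R` be a Prüfer domain, `⋆` a stable (semi)star operation and `L` a `P`-primary ideal.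
Then `L` is `⋆`-closed if and only if `LR_P` is `⋆`-closed. -/
theorem stable_semistar_primary_closed_iff {R K : Type*} [CommRing R] [IsDomain R] [Field K] [Algebra R K]
    [IsFractionRing R K]
    (hR : IsPruferDomain (R := R) K)
    (f : Submodule R K → Submodule R K) (hf : IsSemistarOperation K f)
    (hstable : IsStableOperation K f) (hsemi : f 1 = 1)
    (P : Ideal R) (hP : P.IsPrime) (L : Ideal R) (hL : L.IsPrimary) (hLP : L.radical = P) :
    f (idealToK K L) = idealToK K L ↔
      f (idealToK K L * locSub K P hP) = idealToK K L * locSub K P hP := by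
  obtain ⟨hext, _hid, hmono, hsmul⟩ := hf
  have hsat := sat_eq (K := K) hP hL hLP
  have hLne : L ≠ ⊤ := (Ideal.isPrimary_iff.mp hL).1
  constructor
  · intro hLstar
    refine le_antisymm ?_ (hext _)
    set M := f (idealToK K L * locSub K P hP) with hM
    have hM1 : M ⊓ 1 = idealToK K L := by
      rw [hM, ← hsemi, ← hstable, hsat, hLstar]
    -- M is closed under division by elements outside P
    have hMs : ∀ s : R, s ∉ P → ∀ z ∈ M, (algebraMap R K s)⁻¹ * z ∈ M := by
      intro s hs z hz
      have hs0 : s ≠ 0 := fun h0 => hs (h0 ▸ P.zero_mem)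
      have hsK : algebraMap R K s ≠ 0 := map_ne_zero' hs0
      have hle : (algebraMap R K s)⁻¹ • (idealToK K L * locSub K P hP) ≤
          idealToK K L * locSub K P hP := by
        intro w hw
        have hw2 : w ∈ ((algebraMap R K s)⁻¹ •
            ((idealToK K L * locSub K P hP : Submodule R K) : Set K)) := by
          rw [← Submodule.coe_pointwise_smul]; exact hw
        obtain ⟨w', hw', rfl⟩ := Set.mem_smul_set.mp hw2
        obtain ⟨l, hl, t, ht, hwt⟩ := (mem_mul_locSub_iff hP w').mp hw'
        refine (mem_mul_locSub_iff hP _).mpr ⟨l, hl, s * t,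
          fun h => (hP.mem_or_mem h).elim hs ht, ?_⟩
        rw [map_mul, smul_eq_mul, ← hwt]
        field_simp
      have : (algebraMap R K s)⁻¹ • z ∈ f ((algebraMap R K s)⁻¹ • (idealToK K L * locSub K P hP)) := by
        rw [hsmul]
        exact Submodule.smul_mem_pointwise_smul z _ _ hz
      have h2 := hmono _ _ hle this
      rwa [smul_eq_mul] at h2
    intro z hz
    by_cases hzR : z ∈ locSub K P hP
    · obtain ⟨a, s, hs, hzs⟩ := (mem_locSub_iff hP z).mp hzR
      have haM : algebraMap R K a ∈ M ⊓ 1 := by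
        constructor
        · rw [← hzs]
          have : (s : R) • z ∈ M := M.smul_mem s hz
          rwa [Algebra.smul_def, mul_comm] at this
        · exact Submodule.mem_one.mpr ⟨a, rfl⟩
      rw [hM1] at haM
      obtain ⟨l, hl, hla⟩ := (mem_idealToK_iff _).mp haM
      exact (mem_mul_locSub_iff hP z).mpr ⟨l, hl, s, hs, by rw [hzs, hla]⟩
    · exfalso
      have hz0 : z ≠ 0 := fun h => hzR (h ▸ zero_mem _)
      have hinv := (locSub_valuation hR hP z).resolve_left hzR
      obtain ⟨a, s, hs, hzs⟩ := (mem_locSub_iff hP z⁻¹).mp hinv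
      have hs0 : s ≠ 0 := fun h0 => hs (h0 ▸ P.zero_mem)
      have hsK : algebraMap R K s ≠ 0 := map_ne_zero' hs0
      have h1M : (1 : K) ∈ M := by
        have hm : (algebraMap R K s)⁻¹ * z ∈ M := hMs s hs z hz
        have hm2 : (a : R) • ((algebraMap R K s)⁻¹ * z) ∈ M := M.smul_mem a hm
        have heq : (a : R) • ((algebraMap R K s)⁻¹ * z) = 1 := by
          rw [Algebra.smul_def, ← hzs]
          field_simp
        rwa [heq] at hm2
      have : (1 : K) ∈ M ⊓ 1 := ⟨h1M, Submodule.mem_one.mpr ⟨1, map_one _⟩⟩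
      rw [hM1] at this
      obtain ⟨l, hl, hl1⟩ := (mem_idealToK_iff _).mp this
      have : l = 1 := IsFractionRing.injective R K (by rw [hl1, map_one])
      exact hLne (Ideal.eq_top_iff_one L |>.mpr (this ▸ hl))
  · intro h
    have hst := hstable (idealToK K L * locSub K P hP) 1
    rw [hsat, h, hsemi, hsat] at hst
    exact hst
end

section
/- Let R be a Prüfer domain, let ⋆ be a stable (semi)star operation on R, and let P ⊊ Q be prime ideals of R. If Q belongs to the pseudo-spectrum PsSpec^⋆(R), then P belongs to the quasi-spectrum QSpec^⋆(R). In particular, no two distinct members of PsSpec^⋆(R) are comparable under inclusion. -/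
open Pointwise

section Aux

variable {R : Type*} (K : Type*) [CommRing R] [IsDomain R] [Field K] [Algebra R K]
  [IsFractionRing R K]

lemma mem_idealToK' {I : Ideal R} {r : R} : algebraMap R K r ∈ idealToK K I ↔ r ∈ I := by
  constructor
  · rintro ⟨m, hm, hmr⟩
    rwa [← IsFractionRing.injective R K hmr]
  · exact fun h => ⟨r, h, rfl⟩

lemma idealToK_le_one' (I : Ideal R) : idealToK K I ≤ 1 := by
  rintro _ ⟨m, hm, rfl⟩
  exact Submodule.mem_one.mpr ⟨m, rfl⟩

lemma mem_smulK' {a z : K} {S : Submodule R K} : z ∈ a • S ↔ ∃ m ∈ S, a * m = z := by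
  rw [← SetLike.mem_coe, Submodule.coe_pointwise_smul]
  simp [Set.mem_smul_set, smul_eq_mul]

lemma prufer_sub (hR : IsPruferDomain (R := R) K) {P Q L : Ideal R} (hPp : P.IsPrime)
    (hQ : Q.IsPrime) (hPQ : P < Q) (hprim : L.IsPrimary) (hrad : L.radical = Q) :
    P ≤ L := by
  intro x hx
  by_cases hx0 : x = 0
  · exact hx0 ▸ L.zero_mem
  obtain ⟨q, hqQ, hqP⟩ := SetLike.exists_of_lt hPQ
  obtain ⟨n, hqn⟩ : ∃ n, q ^ n ∈ L := Ideal.mem_radical_iff.mp (hrad ▸ hqQ)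
  set I₀ : Ideal R := Ideal.span {x, q ^ n} with hI₀
  have hxI : x ∈ I₀ := Ideal.subset_span (by simp)
  have hqI : q ^ n ∈ I₀ := Ideal.subset_span (by simp)
  have hne : I₀ ≠ ⊥ := fun h => hx0 (by simpa [h] using hxI)
  have hfg : I₀.FG := Submodule.fg_span (Set.toFinite _)
  obtain ⟨J, hJ⟩ := hR I₀ hne hfg
  set a := algebraMap R K x with ha
  set b := algebraMap R K (q ^ n) with hb
  have hmap : idealToK K I₀ = Submodule.span R {a} ⊔ Submodule.span R {b} := by
    rw [hI₀, idealToK, Ideal.span, Submodule.map_span, Set.image_insert_eq,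
      Set.image_singleton, Submodule.span_insert]
    rfl
  have h1 : (1 : K) ∈ a • J ⊔ b • J := by
    rw [← Submodule.span_singleton_mul, ← Submodule.span_singleton_mul, ← Submodule.sup_mul,
      ← hmap, hJ]
    exact Submodule.mem_one.mpr ⟨1, map_one _⟩
  obtain ⟨u', hu', v', hv', huv⟩ := Submodule.mem_sup.mp h1
  obtain ⟨u, huJ, rfl⟩ := (mem_smulK' K).mp hu'
  obtain ⟨v, hvJ, rfl⟩ := (mem_smulK' K).mp hv'
  have prod_mem : ∀ c ∈ idealToK K I₀, ∀ j ∈ J, c * j ∈ (1 : Submodule R K) := by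
    intro c hc j hj
    rw [← hJ]
    exact Submodule.mul_mem_mul hc hj
  have haI : a ∈ idealToK K I₀ := (mem_idealToK' K).mpr hxI
  have hbI : b ∈ idealToK K I₀ := (mem_idealToK' K).mpr hqI
  obtain ⟨s, hs⟩ := Submodule.mem_one.mp (prod_mem a haI u huJ)
  obtain ⟨t, ht⟩ := Submodule.mem_one.mp (prod_mem b hbI v hvJ)
  obtain ⟨w, hw⟩ := Submodule.mem_one.mp (prod_mem b hbI u huJ)
  obtain ⟨w', hw'⟩ := Submodule.mem_one.mp (prod_mem a haI v hvJ)
  have hst : s + t = 1 := by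
    apply IsFractionRing.injective R K
    rw [map_add, hs, ht, map_one, huv]
  have hsq : s * q ^ n = w * x := by
    apply IsFractionRing.injective R K
    rw [map_mul, map_mul, hs, hw, ← hb, ← ha]
    ring
  have htx : t * x = w' * q ^ n := by
    apply IsFractionRing.injective R K
    rw [map_mul, map_mul, ht, hw', ← hb, ← ha]
    ring
  by_cases hsQ : s ∈ Q
  · have htQ : t ∉ Q := by
      intro h
      exact hQ.ne_top (Ideal.eq_top_iff_one _ |>.mpr (hst ▸ Q.add_mem hsQ h))
    have hxtL : x * t ∈ L := by
      rw [mul_comm, htx]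
      exact L.mul_mem_left w' hqn
    rcases (Ideal.isPrimary_iff.mp hprim).2 hxtL with h | h
    · exact h
    · exact absurd (hrad ▸ h) htQ
  · exfalso
    have hsP : s * q ^ n ∈ P := hsq ▸ P.mul_mem_left w hx
    rcases hPp.mem_or_mem hsP with h | h
    · exact hsQ (hPQ.le h)
    · exact hqP (hPp.mem_of_pow_mem n h)

end Aux

/-- Let `R` be a Prüfer domain and `⋆` a stable (semi)star operation. If `P ⊊ Q` are primes and
`Q ∈ PsSpec^⋆(R)`, then `P ∈ QSpec^⋆(R)`; in particular, no two distinct members of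
`PsSpec^⋆(R)` are comparable. -/
theorem qspec_of_lt_psspec {R K : Type*} [CommRing R] [IsDomain R] [Field K] [Algebra R K]
    [IsFractionRing R K]
    (hR : IsPruferDomain (R := R) K)
    (f : Submodule R K → Submodule R K) (hf : IsSemistarOperation K f)
    (hstable : IsStableOperation K f) (hsemi : f 1 = 1) :
    (∀ P Q : Ideal R, P.IsPrime → P < Q → Q ∈ PsSpec K f → P ∈ QSpec K f) ∧
    (∀ P Q : Ideal R, P ∈ PsSpec K f → Q ∈ PsSpec K f → P ≠ Q → ¬P ≤ Q) := by
  obtain ⟨hext, hid, hmono, hsmul⟩ := hf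
  have main : ∀ P Q : Ideal R, P.IsPrime → P < Q → Q ∈ PsSpec K f → P ∈ QSpec K f := by
    rintro P Q hP hPQ ⟨hQp, hQ1, L, hprim, hrad, hL⟩
    have hPL : P ≤ L := prufer_sub K hR hP hQp hPQ hprim hrad
    refine ⟨hP, le_antisymm ?_ (le_inf ((hext _).trans (hmono _ _ le_rfl))
      (idealToK_le_one' K P))⟩
    rintro y ⟨hy1, hy2⟩
    obtain ⟨r, rfl⟩ := Submodule.mem_one.mp hy2
    rw [mem_idealToK']
    by_contra hr
    have hr0 : r ≠ 0 := fun h => hr (h ▸ P.zero_mem)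
    set y := algebraMap R K r with hy
    have hy0 : y ≠ 0 := fun h => hr0 (IsFractionRing.injective R K (by rw [← hy, h, map_zero]))
    have hA : idealToK K P ⊓ (y • (1 : Submodule R K)) = y • idealToK K P := by
      apply le_antisymm
      · rintro z ⟨hz1, hz2⟩
        obtain ⟨m, hm, rfl⟩ := (mem_smulK' K).mp hz2
        obtain ⟨c, rfl⟩ := Submodule.mem_one.mp hm
        have hrc : r * c ∈ P := by
          rw [← mem_idealToK' (K := K)]
          rwa [map_mul, ← hy]
        have hc : c ∈ P := (hP.mem_or_mem hrc).resolve_left hr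
        exact (mem_smulK' K).mpr ⟨algebraMap R K c, (mem_idealToK' K).mpr hc, rfl⟩
      · rintro z hz
        obtain ⟨m, hm, rfl⟩ := (mem_smulK' K).mp hz
        obtain ⟨p, hp, rfl⟩ := hm
        refine ⟨?_, (mem_smulK' K).mpr ⟨_, idealToK_le_one' K P ⟨p, hp, rfl⟩, rfl⟩⟩
        have : y * (Algebra.linearMap R K) p = algebraMap R K (r * p) := by
          rw [Algebra.linearMap_apply, map_mul, ← hy]
        rw [this]
        exact (mem_idealToK' K).mpr (P.mul_mem_left r hp)
    -- y is in f(P) and in y • 1, so by stability y ∈ y • f(P), hence 1 ∈ f(P)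
    have hone : (1 : K) ∈ f (idealToK K P) := by
      have hyy : y ∈ f (idealToK K P) ⊓ f (y • (1 : Submodule R K)) := by
        refine ⟨hy1, ?_⟩
        rw [hsmul, hsemi]
        exact (mem_smulK' K).mpr ⟨1, Submodule.mem_one.mpr ⟨1, map_one _⟩, mul_one y⟩
      rw [← hstable, hA, hsmul] at hyy
      obtain ⟨m, hmf, hmy⟩ := (mem_smulK' K).mp hyy
      have hm1 : m = 1 := mul_left_cancel₀ hy0 (by rw [mul_one]; exact hmy)
      exact hm1 ▸ hmf
    have hle1 : (1 : Submodule R K) ≤ f (idealToK K L) := by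
      intro w hw
      obtain ⟨c, rfl⟩ := Submodule.mem_one.mp hw
      have hc : algebraMap R K c ∈ f (idealToK K P) := by
        have := Submodule.smul_mem (f (idealToK K P)) c hone
        rwa [Algebra.smul_def, mul_one] at this
      exact hmono _ _ (Submodule.map_mono hPL) hc
    have h1L : (1 : R) ∈ L := by
      have : (algebraMap R K 1) ∈ idealToK K L := by
        rw [← hL]
        exact ⟨hle1 (Submodule.mem_one.mpr ⟨1, rfl⟩), Submodule.mem_one.mpr ⟨1, rfl⟩⟩
      exact (mem_idealToK' K).mp this
    exact absurd (Ideal.eq_top_iff_one L |>.mpr h1L) hprim.1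
  refine ⟨main, fun P Q hP hQ hne hle => ?_⟩
  have hq := main P Q hP.1 (lt_of_le_of_ne hle hne) hQ
  have h1 : idealToK K P = 1 := by rw [← hq.2, hP.2.1]
  have h1P : (1 : R) ∈ P := by
    have : (algebraMap R K 1) ∈ idealToK K P := by
      rw [h1]; exact Submodule.mem_one.mpr ⟨1, rfl⟩
    exact (mem_idealToK' K).mp this
  exact hP.1.ne_top (Ideal.eq_top_iff_one P |>.mpr h1P)
end

section
/- Let R be a Prüfer domain, let ⋆ be a stable (semi)star operation on R, and let P be a prime ideal of R such that the maximal ideal PR_P of the localization R_P is a principal ideal of R_P. Then P does not belong to the pseudo-spectrum PsSpec^⋆(R). -/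
open Pointwise

section Helpers2



variable {R K : Type*} [CommRing R] [IsDomain R] [Field K] [Algebra R K] [IsFractionRing R K]

lemma aux_mem_smul {a : K} {S : Submodule R K} {z : K} : z ∈ a • S ↔ ∃ y ∈ S, a * y = z := by
  rw [← SetLike.mem_coe, Submodule.coe_pointwise_smul]
  simp [Set.mem_smul_set, smul_eq_mul]

lemma aux_mem_idealToK {I : Ideal R} {z : K} :
    z ∈ idealToK K I ↔ ∃ r ∈ I, algebraMap R K r = z := by
  simp [idealToK, Submodule.mem_map, Algebra.linearMap_apply]

lemma aux_mem_one {z : K} : z ∈ (1 : Submodule R K) ↔ ∃ r : R, algebraMap R K r = z := by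
  rw [Submodule.one_eq_range]; simp

lemma aux_one_mem_one : (1 : K) ∈ (1 : Submodule R K) :=
  aux_mem_one.mpr ⟨1, map_one _⟩

lemma aux_mem_locSub_iff {P : Ideal R} (hP : P.IsPrime) {z : K} :
    z ∈ locSub K P hP ↔ ∃ (a s : R) (_ : s ∈ P.primeCompl),
      z = algebraMap R K a / algebraMap R K s := by
  constructor
  · rintro ⟨a, s, hs, rfl⟩
    exact ⟨a, s, hs, IsFractionRing.mk'_eq_div _⟩
  · rintro ⟨a, s, hs, rfl⟩
    exact ⟨a, s, hs, by rw [IsFractionRing.mk'_eq_div]⟩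

lemma aux_one_mem_locSub {P : Ideal R} (hP : P.IsPrime) : (1 : K) ∈ locSub K P hP :=
  (aux_mem_locSub_iff hP).mpr ⟨1, 1, P.primeCompl.one_mem, by simp⟩

lemma aux_one_le_locSub {P : Ideal R} (hP : P.IsPrime) :
    (1 : Submodule R K) ≤ locSub K P hP := by
  rintro z hz
  obtain ⟨r, rfl⟩ := aux_mem_one.mp hz
  exact (aux_mem_locSub_iff hP).mpr ⟨r, 1, P.primeCompl.one_mem, by simp⟩

lemma aux_locSub_mul_self {P : Ideal R} (hP : P.IsPrime) :
    locSub K P hP * locSub K P hP = locSub K P hP := by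
  apply le_antisymm
  · apply Submodule.mul_le.mpr
    intro a ha b hb
    obtain ⟨a1, s1, hs1, rfl⟩ := (aux_mem_locSub_iff hP).mp ha
    obtain ⟨a2, s2, hs2, rfl⟩ := (aux_mem_locSub_iff hP).mp hb
    exact (aux_mem_locSub_iff hP).mpr ⟨a1 * a2, s1 * s2, P.primeCompl.mul_mem hs1 hs2,
      by rw [map_mul, map_mul]; ring⟩
  · intro z hz
    simpa using Submodule.mul_mem_mul hz (aux_one_mem_locSub hP)

lemma aux_le_mul_locSub {P : Ideal R} (hP : P.IsPrime) (J : Submodule R K) :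
    J ≤ J * locSub K P hP := by
  intro z hz
  simpa using Submodule.mul_mem_mul hz (aux_one_mem_locSub hP)

/-- Membership characterization of `J * R_P`. -/
lemma aux_mem_mul_locSub {P : Ideal R} (hP : P.IsPrime) {J : Submodule R K} {z : K}
    (hz : z ∈ J * locSub K P hP) :
    ∃ s ∈ P.primeCompl, algebraMap R K s * z ∈ J := by
  refine Submodule.mul_induction_on hz ?_ ?_
  · intro j hj t ht
    obtain ⟨a, s, hs, rfl⟩ := (aux_mem_locSub_iff hP).mp ht
    refine ⟨s, hs, ?_⟩
    have hs0 : algebraMap R K s ≠ 0 := by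
      have : s ≠ 0 := fun h => hs (h ▸ P.zero_mem)
      simpa using fun h => this (IsFractionRing.injective R K (by simpa using h))
    have : algebraMap R K s * (j * (algebraMap R K a / algebraMap R K s)) =
        algebraMap R K a * j := by field_simp
    rw [this]
    have := Algebra.smul_def a j
    rw [← this]
    exact J.smul_mem a hj
  · rintro u v ⟨s, hs, hsu⟩ ⟨t, ht, htv⟩
    refine ⟨s * t, P.primeCompl.mul_mem hs ht, ?_⟩
    have : algebraMap R K (s * t) * (u + v) =
        algebraMap R K t * (algebraMap R K s * u) + algebraMap R K s * (algebraMap R K t * v) := by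
      rw [map_mul]; ring
    rw [this]
    refine J.add_mem ?_ ?_
    · rw [← Algebra.smul_def]; exact J.smul_mem t hsu
    · rw [← Algebra.smul_def]; exact J.smul_mem s htv

/-- A semistar operation is sub-multiplicative. -/
lemma aux_star_mul {f : Submodule R K → Submodule R K}
    (hext : ∀ I : Submodule R K, I ≤ f I)
    (hidem : ∀ I : Submodule R K, f (f I) = f I)
    (hmono : ∀ I J : Submodule R K, I ≤ J → f I ≤ f J)
    (hsmul : ∀ (x : K) (I : Submodule R K), f (x • I) = x • f I)
    (I J : Submodule R K) : f I * f J ≤ f (I * J) := by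
  have step : ∀ I J : Submodule R K, I * f J ≤ f (I * J) := by
    intro I J
    apply Submodule.mul_le.mpr
    intro a ha b hb
    have h1 : a • J ≤ I * J := by
      intro z hz
      obtain ⟨y, hy, rfl⟩ := aux_mem_smul.mp hz
      exact Submodule.mul_mem_mul ha hy
    have h2 : a * b ∈ a • f J := aux_mem_smul.mpr ⟨b, hb, rfl⟩
    have h3 : a • f J = f (a • J) := (hsmul a J).symm
    rw [h3] at h2
    exact hmono _ _ h1 h2
  calc f I * f J = f J * f I := mul_comm _ _
    _ ≤ f (f J * I) := step _ _
    _ = f (I * f J) := by rw [mul_comm]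
    _ ≤ f (f (I * J)) := hmono _ _ (step I J)
    _ = f (I * J) := hidem _

end Helpers2

/-- Let `R` be a Prüfer domain and `⋆` a stable (semi)star operation. If the maximal ideal
`PR_P` of `R_P` is principal over `R_P`, then `P ∉ PsSpec^⋆(R)`. -/
theorem not_mem_psspec_of_principal {R K : Type*} [CommRing R] [IsDomain R] [Field K] [Algebra R K]
    [IsFractionRing R K]
    (hR : IsPruferDomain (R := R) K)
    (f : Submodule R K → Submodule R K) (hf : IsSemistarOperation K f)
    (hstable : IsStableOperation K f) (hsemi : f 1 = 1)
    (P : Ideal R) (hP : P.IsPrime)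
    (hprinc : ∃ x : K, idealToK K P * locSub K P hP = x • locSub K P hP) :
    P ∉ PsSpec K f := by
  obtain ⟨hext, hidem, hmono, hsmul⟩ := hf
  rintro ⟨hP', h1, L, hLprim, hLrad, hL⟩
  obtain ⟨x, hx⟩ := hprinc
  set A := algebraMap R K with hA
  set T := locSub K P hP with hTdef
  set S := f T with hSdef
  have hinj : Function.Injective A := IsFractionRing.injective R K
  have hAne : ∀ r : R, r ≠ 0 → A r ≠ 0 := fun r hr h =>
    hr (hinj (by rw [h, map_zero]))
  have hTT : T * T = T := aux_locSub_mul_self hP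
  have hSS : S * S ≤ S := by
    calc S * S ≤ f (T * T) := aux_star_mul hext hidem hmono hsmul T T
      _ = S := by rw [hTT]
  have hTS : T * S ≤ S := le_trans (mul_le_mul' (hext T) le_rfl) hSS
  -- `1 ∈ f (idealToK K P)`
  have honeP : (1 : K) ∈ f (idealToK K P) := by
    have : (1 : K) ∈ f (idealToK K P) ⊓ 1 := by rw [h1]; exact aux_one_mem_one
    exact this.1
  -- `idealToK K P ≤ x • T`
  have hPle : idealToK K P ≤ x • T := hx ▸ aux_le_mul_locSub hP _
  have honexS : (1 : K) ∈ x • S := by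
    have : f (idealToK K P) ≤ x • S := by
      rw [hSdef, ← hsmul]
      exact hmono _ _ hPle
    exact this honeP
  obtain ⟨s₀, hs₀, hs₀1⟩ := aux_mem_smul.mp honexS
  have hx0 : x ≠ 0 := fun h => one_ne_zero (by rw [← hs₀1, h, zero_mul])
  have hxinv : x⁻¹ ∈ S := by
    rw [← inv_eq_of_mul_eq_one_right hs₀1] at hs₀; exact hs₀
  -- Find a generator of `P R_P` coming from `P`.
  have key : ∃ p ∈ P, A p ∉ x • (x • T) := by
    by_contra hcon
    push_neg at hcon
    have h2 : idealToK K P ≤ x • x • T := by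
      intro z hz
      obtain ⟨p, hp, rfl⟩ := aux_mem_idealToK.mp hz
      exact hcon p hp
    have h3 : x • T ≤ x • x • T := by
      calc x • T = idealToK K P * T := hx.symm
        _ ≤ (x • x • T) * T := mul_le_mul' h2 le_rfl
        _ = x • x • (T * T) := by rw [smul_mul_assoc, smul_mul_assoc]
        _ = x • x • T := by rw [hTT]
    have h4 : T ≤ x • T := by
      intro t ht
      have h5 : x • t ∈ x • x • T := h3 (Submodule.smul_mem_pointwise_smul t x T ht)
      obtain ⟨u, hu, huv⟩ := aux_mem_smul.mp h5
      have : u = t := by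
        have : x * u = x * t := huv
        exact mul_left_cancel₀ hx0 this
      exact this ▸ hu
    have h5 : (1 : K) ∈ idealToK K P * T := by
      rw [hx]; exact h4 (aux_one_mem_locSub hP)
    obtain ⟨s, hs, hs'⟩ := aux_mem_mul_locSub hP h5
    rw [mul_one] at hs'
    obtain ⟨r, hr, hr'⟩ := aux_mem_idealToK.mp hs'
    exact hs (by rwa [← hinj hr'])
  obtain ⟨p, hpP, hpx⟩ := key
  -- write `A p = x * u` with `u` a unit of `R_P`
  have hpmem : A p ∈ x • T := hPle (aux_mem_idealToK.mpr ⟨p, hpP, rfl⟩)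
  obtain ⟨u, huT, hu⟩ := aux_mem_smul.mp hpmem
  have hunx : u ∉ x • T := fun h => hpx (by
    rw [← hu]
    exact Submodule.smul_mem_pointwise_smul u x _ h)
  obtain ⟨a, s, hs, rfl⟩ := (aux_mem_locSub_iff hP).mp huT
  have haP : a ∉ P := by
    intro haP
    apply hunx
    rw [← hx]
    have h1a : A a ∈ idealToK K P := aux_mem_idealToK.mpr ⟨a, haP, rfl⟩
    have h2a : (A s)⁻¹ ∈ T := (aux_mem_locSub_iff hP).mpr ⟨1, s, hs, by simp [hA]⟩
    have : A a / A s = A a * (A s)⁻¹ := div_eq_mul_inv _ _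
    rw [this]
    exact Submodule.mul_mem_mul h1a h2a
  have ha0 : A a ≠ 0 := hAne a (fun h => haP (h ▸ P.zero_mem))
  have hs0 : A s ≠ 0 := hAne s (fun h => hs (h ▸ P.zero_mem))
  set y := A p with hy
  have hyu : y = x * (A a / A s) := hu.symm
  have hy0 : y ≠ 0 := by
    rw [hyu]
    exact mul_ne_zero hx0 (div_ne_zero ha0 hs0)
  have hyinvS : y⁻¹ ∈ S := by
    have huinvT : (A a / A s)⁻¹ ∈ T :=
      (aux_mem_locSub_iff hP).mpr ⟨s, a, haP, by rw [inv_div]⟩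
    have : y⁻¹ = (A a / A s)⁻¹ * x⁻¹ := by
      rw [hyu, mul_inv, mul_comm]
    rw [this]
    exact hSS (Submodule.mul_mem_mul (hext T huinvT) hxinv)
  -- the module `M = L R_P`
  set J := idealToK K L with hJdef
  set M := J * T with hMdef
  have hJ1 : J ≤ 1 := by
    intro z hz
    obtain ⟨r, _, rfl⟩ := aux_mem_idealToK.mp hz
    exact aux_mem_one.mpr ⟨r, rfl⟩
  have hM1 : M ⊓ 1 = J := by
    apply le_antisymm
    · rintro z ⟨hzM, hz1⟩
      obtain ⟨r, rfl⟩ := aux_mem_one.mp hz1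
      obtain ⟨t, ht, ht'⟩ := aux_mem_mul_locSub hP hzM
      rw [← map_mul] at ht'
      obtain ⟨l, hl, hl'⟩ := aux_mem_idealToK.mp ht'
      have htr : r * t ∈ L := by rw [mul_comm]; rwa [← hinj hl']
      have : r ∈ L := by
        rcases (Ideal.isPrimary_iff.mp hLprim).2 htr with h | h
        · exact h
        · rw [hLrad] at h
          exact absurd h ht
      exact aux_mem_idealToK.mpr ⟨r, this, rfl⟩
    · exact le_inf (aux_le_mul_locSub hP J) hJ1
  have hfM1 : f M ⊓ 1 = J := by
    have e1 : f M ⊓ 1 = f (M ⊓ 1) := by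
      rw [hstable M 1, hsemi]
    calc f M ⊓ 1 = (f M ⊓ 1) ⊓ 1 := by rw [inf_assoc, inf_idem]
      _ = f (M ⊓ 1) ⊓ 1 := by rw [e1]
      _ = f J ⊓ 1 := by rw [hM1]
      _ = J := hL
  -- `f M` is stable under multiplication by `y⁻¹`
  have hSfM : S * f M ≤ f M := by
    have hTM : T * M = M := by
      rw [hMdef, ← mul_assoc, mul_comm T J, mul_assoc, hTT]
    calc S * f M ≤ f (T * M) := aux_star_mul hext hidem hmono hsmul T M
      _ = f M := by rw [hTM]
  -- descent
  have descent : ∀ k : ℕ, y ^ k ∈ f M → (1 : K) ∈ f M := by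
    intro k
    induction k with
    | zero => intro h; simpa using h
    | succ n ih =>
      intro h
      apply ih
      have e : y ^ n = y⁻¹ * y ^ (n + 1) := by
        rw [pow_succ, ← mul_assoc, mul_comm y⁻¹ (y ^ n), mul_assoc, mul_comm y⁻¹ y,
          mul_inv_cancel₀ hy0, mul_one]
      rw [e]
      exact hSfM (Submodule.mul_mem_mul hyinvS h)
  have hpr : p ∈ L.radical := by rw [hLrad]; exact hpP
  obtain ⟨m, hm⟩ := Ideal.mem_radical_iff.mp hpr
  have hym : y ^ m ∈ f M := by
    have h1m : (algebraMap R K (p ^ m) : K) ∈ J := aux_mem_idealToK.mpr ⟨p ^ m, hm, rfl⟩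
    have h2m : y ^ m = A (p ^ m) := by rw [hy, map_pow]
    rw [h2m]
    exact hext M (aux_le_mul_locSub hP J h1m)
  have hone : (1 : K) ∈ J := by
    rw [← hfM1]
    exact ⟨descent m hym, aux_one_mem_one⟩
  obtain ⟨l, hl, hl'⟩ := aux_mem_idealToK.mp hone
  have hl1 : l = 1 := hinj (by rw [hl', map_one])
  exact hLprim.1 ((Ideal.eq_top_iff_one L).mpr (hl1 ▸ hl))
end
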